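/- arXiv:math/0608357 — 2 statements merged into one kernel-verified Lean document; each statement's English description precedes it below -/
import Mathlib

section
/- Let X₁, X₂, … be i.i.d. integer-valued random variables with |Xᵢ| ≤ 1 and E[X₁] > 0, and let S(n) = X₁ + ⋯ + Xₙ. Then the probability α that S(n) > 0 for all n ≥ 1 is strictly positive, and ∑_{m=0}^∞ P[S(m) = L] = 1/α for every L ∈ ℕ, where S(0) = 0. -/
open MeasureTheory ProbabilityTheory Filter Finset

/-!
Decompose according to the last visit to `L`. The walk starts at `0 ≤ L`, goes up by at most one
per step and tends to `+∞` almost surely (strong law of large numbers), so almost surely there is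
exactly one time `m` with `S m = L` and `S n > L` for all `n > m`. That event is `{S m = L}`
intersected with the event that the walk restarted at time `m` stays positive forever. The two
depend on disjoint blocks of steps, and the restarted walk has the same law as the original one,
so the event has probability `P[S m = L] * α`. Summing over `m` gives `(∑ₘ P[S m = L]) * α = 1`.
-/

def IsLastVisit (s : ℕ → ℤ) (L : ℤ) (m : ℕ) : Prop :=
  s m = L ∧ ∀ n, m < n → L < s n

lemma IsLastVisit.unique {s : ℕ → ℤ} {L : ℤ} {m m' : ℕ} (h : IsLastVisit s L m)
    (h' : IsLastVisit s L m') : m = m' := by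
  by_contra hne
  rcases Nat.lt_or_gt_of_ne hne with hlt | hlt
  · exact (h.2 m' hlt).ne' h'.1
  · exact (h'.2 m hlt).ne' h.1

lemma exists_isLastVisit {s : ℕ → ℤ} {L : ℤ} (h0 : s 0 ≤ L) (hstep : ∀ n, s (n + 1) ≤ s n + 1)
    (hs : Tendsto s atTop atTop) : ∃ m, IsLastVisit s L m := by
  obtain ⟨N, hN⟩ := (hs.eventually_gt_atTop L).exists_forall_of_atTop
  set m := Nat.findGreatest (fun n => s n ≤ L) N
  have hm : s m ≤ L := Nat.findGreatest_spec (P := fun n => s n ≤ L) (Nat.zero_le N) h0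
  have hafter : ∀ n, m < n → L < s n := by
    intro n hn
    by_contra hle
    rcases le_or_gt n N with hnN | hNn
    · exact Nat.findGreatest_is_greatest hn hnN (not_lt.1 hle)
    · exact hle (hN n hNn.le)
  have hnext : L < s (m + 1) := hafter (m + 1) m.lt_succ_self
  exact ⟨m, by linarith [hstep m], hafter⟩

def partialSumsPos : Set (ℕ → ℤ) := {x | ∀ n, 1 ≤ n → 0 < ∑ i ∈ range n, x i}

lemma measurableSet_partialSumsPos : MeasurableSet partialSumsPos := by
  simp only [partialSumsPos, Set.ofPred_forall]
  exact .iInter fun n => .iInter fun _ => measurableSet_lt measurable_const (by fun_prop)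

lemma isLastVisit_partialSums_iff {x : ℕ → ℤ} {L : ℤ} {m : ℕ} :
    IsLastVisit (fun n => ∑ i ∈ range n, x i) L m ↔
      ∑ i ∈ range m, x i = L ∧ (fun i => x (m + i)) ∈ partialSumsPos := by
  refine and_congr_right fun hm => ⟨fun h k hk => ?_, fun h n hn => ?_⟩
  · have := h (m + k) (by omega)
    dsimp only at hm this ⊢
    rw [sum_range_add, hm] at this
    linarith
  · obtain ⟨k, rfl⟩ := Nat.exists_eq_add_of_lt hn
    have := h (k + 1) (by omega)
    dsimp only at hm this ⊢
    rw [add_assoc, sum_range_add, hm]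
    linarith

section Shift

variable {Ω β : Type*} [MeasurableSpace Ω] [MeasurableSpace β] {μ : Measure Ω} {X : ℕ → Ω → β}

lemma ProbabilityTheory.iIndepFun.map_shift_eq_map [IsProbabilityMeasure μ]
    (hindep : iIndepFun X μ) (hmeas : ∀ i, Measurable (X i))
    (hident : ∀ i, IdentDistrib (X i) (X 0) μ μ) (m : ℕ) :
    μ.map (fun ω i => X (m + i) ω) = μ.map (fun ω i => X i ω) := by
  have hlaw : ∀ k, μ.map (fun ω i => X (k + i) ω) = Measure.infinitePi fun _ => μ.map (X 0) :=
    fun k => by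
      rw [(hindep.precomp (add_right_injective k)).map_fun_eq_infinitePi_map fun i => hmeas _]
      simp only [(hident _).map_eq]
  simpa using (hlaw m).trans (hlaw 0).symm

lemma ProbabilityTheory.iIndepFun.indepFun_prefix_shift (hindep : iIndepFun X μ)
    (hmeas : ∀ i, Measurable (X i)) (m : ℕ) :
    IndepFun (fun ω (i : Fin m) => X i ω) (fun ω i => X (m + i) ω) μ := by
  have hdisj : Disjoint {i : ℕ | i < m} {i | m ≤ i} :=
    Set.disjoint_left.2 fun _ hi hi' => Nat.lt_irrefl _ (lt_of_le_of_lt hi' hi)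
  have hind := indep_iSup_of_disjoint (fun i => (hmeas i).comap_le) hindep.iIndep hdisj
  have hblock : ∀ {T : Set ℕ} {Y : Type} {f : Y → ℕ}, (∀ y, f y ∈ T) →
      MeasurableSpace.comap (fun ω y => X (f y) ω) MeasurableSpace.pi ≤
        ⨆ j ∈ T, MeasurableSpace.comap (X j) inferInstance := fun hf => by
    simp only [MeasurableSpace.pi, MeasurableSpace.comap_iSup, MeasurableSpace.comap_comp]
    exact iSup_le fun y => le_biSup (fun j => MeasurableSpace.comap (X j) inferInstance) (hf y)
  exact indep_of_indep_of_le_right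
    (indep_of_indep_of_le_left hind (hblock fun i : Fin m => i.2))
    (hblock fun i => m.le_add_right i)

end Shift

lemma ae_tendsto_sum_range_atTop_of_integral_pos {Ω : Type*} [MeasurableSpace Ω] {μ : Measure Ω}
    {Y : ℕ → Ω → ℝ} (hint : Integrable (Y 0) μ)
    (hindep : Pairwise (Function.onFun (IndepFun · · μ) Y))
    (hident : ∀ i, IdentDistrib (Y i) (Y 0) μ μ) (hpos : 0 < μ[Y 0]) :
    ∀ᵐ ω ∂μ, Tendsto (fun n => ∑ i ∈ range n, Y i ω) atTop atTop := by
  filter_upwards [strong_law_ae_real Y hint hindep hident] with ω hω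
  refine (tendsto_natCast_atTop_atTop.atTop_mul_pos hpos hω).congr' ?_
  filter_upwards [eventually_ne_atTop 0] with n hn
  field_simp

section Walk

variable {Ω : Type*} {X : ℕ → Ω → ℤ}

lemma setOf_isLastVisit_eq (L : ℤ) (m : ℕ) :
    {ω | IsLastVisit (fun n => ∑ i ∈ range n, X i ω) L m} =
      (fun ω (i : Fin m) => X i ω) ⁻¹' {x | ∑ i, x i = L} ∩
        (fun ω i => X (m + i) ω) ⁻¹' partialSumsPos := by
  ext ω
  simp [isLastVisit_partialSums_iff, Fin.sum_univ_eq_sum_range (fun i => X i ω)]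

variable [MeasurableSpace Ω] {μ : Measure Ω}

lemma measurableSet_isLastVisit (hmeas : ∀ i, Measurable (X i)) (L : ℤ) (m : ℕ) :
    MeasurableSet {ω | IsLastVisit (fun n => ∑ i ∈ range n, X i ω) L m} := by
  rw [setOf_isLastVisit_eq]
  have hprefix : Measurable fun ω (i : Fin m) => X i ω := measurable_pi_lambda _ fun i => hmeas _
  have htail : Measurable fun ω i => X (m + i) ω := measurable_pi_lambda _ fun i => hmeas _
  exact (hprefix (measurableSet_eq_fun (by fun_prop) measurable_const)).inter
    (htail measurableSet_partialSumsPos)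

variable [IsProbabilityMeasure μ]

lemma measure_isLastVisit (hmeas : ∀ i, Measurable (X i)) (hindep : iIndepFun X μ)
    (hident : ∀ i, IdentDistrib (X i) (X 0) μ μ) (L : ℤ) (m : ℕ) :
    μ {ω | IsLastVisit (fun n => ∑ i ∈ range n, X i ω) L m} =
      μ {ω | ∑ i ∈ range m, X i ω = L} * μ ((fun ω i => X i ω) ⁻¹' partialSumsPos) := by
  have hvisit : {ω | ∑ i ∈ range m, X i ω = L} =
      (fun ω (i : Fin m) => X i ω) ⁻¹' {x | ∑ i, x i = L} := by
    ext ω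
    simp [Fin.sum_univ_eq_sum_range (fun i => X i ω)]
  rw [setOf_isLastVisit_eq, hvisit,
    (hindep.indepFun_prefix_shift hmeas m).measure_inter_preimage_eq_mul _ _
      (measurableSet_eq_fun (by fun_prop) measurable_const) measurableSet_partialSumsPos,
    ← Measure.map_apply (measurable_pi_lambda _ fun i => hmeas _) measurableSet_partialSumsPos,
    hindep.map_shift_eq_map hmeas hident,
    Measure.map_apply (measurable_pi_lambda _ hmeas) measurableSet_partialSumsPos]

lemma tsum_measure_sum_range_eq_mul_measure_partialSumsPos_eq_one (hmeas : ∀ i, Measurable (X i))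
    (hindep : iIndepFun X μ) (hident : ∀ i, IdentDistrib (X i) (X 0) μ μ)
    (hstep : ∀ i ω, X i ω ≤ 1)
    (htend : ∀ᵐ ω ∂μ, Tendsto (fun n => ∑ i ∈ range n, X i ω) atTop atTop) {L : ℤ} (hL : 0 ≤ L) :
    (∑' m, μ {ω | ∑ i ∈ range m, X i ω = L}) * μ ((fun ω i => X i ω) ⁻¹' partialSumsPos) = 1 := by
  have hcover : ∀ᵐ ω ∂μ, ω ∈ ⋃ m, {ω | IsLastVisit (fun n => ∑ i ∈ range n, X i ω) L m} := by
    filter_upwards [htend] with ω hω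
    exact Set.mem_iUnion.2 (exists_isLastVisit (by simpa using hL)
      (fun n => by rw [sum_range_succ]; linarith [hstep n ω]) hω)
  calc (∑' m, μ {ω | ∑ i ∈ range m, X i ω = L}) * μ ((fun ω i => X i ω) ⁻¹' partialSumsPos)
      = ∑' m, μ {ω | IsLastVisit (fun n => ∑ i ∈ range n, X i ω) L m} := by
        rw [← ENNReal.tsum_mul_right]
        exact tsum_congr fun m => (measure_isLastVisit hmeas hindep hident L m).symm
    _ = μ (⋃ m, {ω | IsLastVisit (fun n => ∑ i ∈ range n, X i ω) L m}) :=
        (measure_iUnion (fun m m' hne => Set.disjoint_left.2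
          fun ω (h : IsLastVisit (fun n => ∑ i ∈ range n, X i ω) L m) h' => hne (h.unique h'))
          (measurableSet_isLastVisit hmeas L)).symm
    _ = 1 := by
        rw [← measure_univ (μ := μ)]
        exact (ae_iff_measure_eq
          (MeasurableSet.iUnion (measurableSet_isLastVisit hmeas L)).nullMeasurableSet).1 hcover

end Walk

theorem renewal_visits_eq_inv_alpha
    {Ω : Type*} [MeasurableSpace Ω] (μ : Measure Ω) [IsProbabilityMeasure μ]
    (X : ℕ → Ω → ℤ)
    (hmeas : ∀ i, Measurable (X i))
    (hindep : iIndepFun X μ)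
    (hident : ∀ i, IdentDistrib (X i) (X 0) μ μ)
    (hbdd : ∀ i ω, |X i ω| ≤ 1)
    (hdrift : 0 < ∫ ω, ((X 0 ω : ℝ)) ∂μ)
    (α : ENNReal)
    (hα : α = μ {ω | ∀ n : ℕ, 1 ≤ n → 0 < ∑ i ∈ Finset.range n, X i ω}) :
    0 < α ∧
      ∀ L : ℕ, ∑' m : ℕ, μ {ω | ∑ i ∈ Finset.range m, X i ω = (L : ℤ)} = α⁻¹ := by
  have hcast : Measurable (fun z : ℤ => (z : ℝ)) := measurable_from_top
  have hint : Integrable (fun ω => (X 0 ω : ℝ)) μ :=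
    .of_bound (hcast.comp (hmeas 0)).aestronglyMeasurable 1
      (.of_forall fun ω => by rw [Real.norm_eq_abs, ← Int.cast_abs]; exact_mod_cast hbdd 0 ω)
  have htend : ∀ᵐ ω ∂μ, Tendsto (fun n => ∑ i ∈ range n, X i ω) atTop atTop := by
    filter_upwards [ae_tendsto_sum_range_atTop_of_integral_pos hint
      (fun i j hij => (hindep.indepFun hij).comp hcast hcast) (fun i => (hident i).comp hcast)
      hdrift] with ω hω
    exact tendsto_intCast_atTop_iff (R := ℝ) |>.1 (by simpa using hω)
  have hrenewal (L : ℕ) : (∑' m, μ {ω | ∑ i ∈ range m, X i ω = (L : ℤ)}) * α = 1 :=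
    hα ▸ tsum_measure_sum_range_eq_mul_measure_partialSumsPos_eq_one hmeas hindep hident
      (fun i ω => (abs_le.1 (hbdd i ω)).2) htend L.cast_nonneg
  have hα0 : α ≠ 0 := fun h => by simpa [h] using hrenewal 0
  exact ⟨pos_iff_ne_zero.2 hα0, fun L => ENNReal.eq_inv_of_mul_eq_one_left (hrenewal L)⟩
end

section
/- Let (a_L)_{L≥0} and (π_k)_{k≥1} be nonnegative sequences with a_0 = 1, a_L ≤ 1 for all L, a_L ≥ α > 0 for all L ≥ 1, satisfying the renewal equation a_L = ∑_{k=1}^L π_k a_{L-k} for all L ≥ 1. Then ∑_{k≥1} π_k = 1 and ∑_{k≥1} k·π_k < ∞. -/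
open Finset Filter Topology

/-!
Summing the renewal equation over `L ≤ N` and exchanging the order of summation gives the
last-renewal decomposition `∑_{L ≤ N} a_L (1 - P_{N-L}) = 1`, where `P_m = ∑_{k ≤ m} π_k`.
Since `α P_L ≤ a_L ≤ 1`, the sequence `π` is summable, say with sum `S`. Writing
`1 - P_m = (1 - S) + τ_m` with tails `τ_m → 0`, the decomposition gives
`|1 - S| α (N + 1) ≤ 1 + ∑_{m ≤ N} τ_m`, so `S = 1` because the Cesàro means of `τ` tend to `0`.
Then the decomposition reads `α ∑_{m ≤ N} τ_m ≤ 1`, and `∑_m τ_m = ∑_k k π_k`.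
-/

theorem Finset.sum_Icc_one_eq_sum_range_succ {M : Type*} [AddCommMonoid M] {f : ℕ → M}
    (hf : f 0 = 0) (n : ℕ) : ∑ k ∈ Icc 1 n, f k = ∑ k ∈ range (n + 1), f k := by
  rw [Nat.range_succ_eq_Icc_zero, ← sum_Ioc_add_eq_sum_Icc n.zero_le, hf, add_zero]
  rfl

theorem Finset.sum_range_succ_mul_sub_comm {R : Type*} [CommSemiring R] (f g : ℕ → R) (n : ℕ) :
    ∑ k ∈ range (n + 1), f k * g (n - k) = ∑ k ∈ range (n + 1), g k * f (n - k) := by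
  rw [← Nat.sum_antidiagonal_eq_sum_range_succ (fun i j => f i * g j),
    ← Nat.sum_antidiagonal_eq_sum_range_succ (fun i j => g i * f j), ← Nat.sum_antidiagonal_swap]
  simp only [Prod.fst_swap, Prod.snd_swap, mul_comm]

theorem sum_mul_one_sub_sum_range_eq_one_of_renewal {R : Type*} [CommRing R] {a π : ℕ → R}
    (ha0 : a 0 = 1) (hπ0 : π 0 = 0)
    (hren : ∀ m, 1 ≤ m → a m = ∑ L ∈ range (m + 1), a L * π (m - L)) (N : ℕ) :
    ∑ L ∈ range (N + 1), a L * (1 - ∑ k ∈ range (N - L + 1), π k) = 1 := by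
  have hdouble : ∑ L ∈ range (N + 1), a L * ∑ k ∈ range (N - L + 1), π k
      = ∑ m ∈ range (N + 1), ∑ L ∈ range (m + 1), a L * π (m - L) := by
    rw [sum_range_diag_flip (N + 1) fun L k => a L * π k]
    refine sum_congr rfl fun L hL => ?_
    rw [mul_sum, Nat.sub_add_comm (Nat.lt_succ_iff.1 (mem_range.1 hL))]
  have hconv : ∑ m ∈ range (N + 1), ∑ L ∈ range (m + 1), a L * π (m - L)
      = ∑ m ∈ range N, a (m + 1) := by
    rw [sum_range_succ']
    simp only [zero_add, range_one, sum_singleton, Nat.sub_zero, hπ0, mul_zero, add_zero]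
    exact sum_congr rfl fun m _ => (hren (m + 1) m.succ_pos).symm
  simp only [mul_sub, mul_one, sum_sub_distrib, hdouble, hconv, sum_range_succ' a, ha0]
  ring

theorem summable_of_renewal {a π : ℕ → ℝ} {α : ℝ} (hα : 0 < α) (hπ0 : π 0 = 0)
    (hπnn : ∀ k, 0 ≤ π k) (hale : ∀ L, a L ≤ 1) (haα : ∀ L, α ≤ a L)
    (hren : ∀ L, 1 ≤ L → a L = ∑ k ∈ Icc 1 L, π k * a (L - k)) : Summable π := by
  have hP : ∀ n, α * ∑ k ∈ Icc 1 n, π k ≤ 1 := by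
    rintro (_ | n)
    · simp
    · calc α * ∑ k ∈ Icc 1 (n + 1), π k ≤ ∑ k ∈ Icc 1 (n + 1), π k * a (n + 1 - k) := by
            rw [mul_sum]
            exact sum_le_sum fun k _ => by
              rw [mul_comm]; exact mul_le_mul_of_nonneg_left (haα _) (hπnn k)
        _ = a (n + 1) := (hren _ n.succ_pos).symm
        _ ≤ 1 := hale _
  refine summable_of_sum_range_le hπnn (c := 1 / α) fun n => ?_
  calc ∑ k ∈ range n, π k ≤ ∑ k ∈ range (n + 1), π k :=
        sum_le_sum_of_subset_of_nonneg (range_subset_range.2 n.le_succ) fun k _ _ => hπnn k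
    _ ≤ 1 / α := by rw [le_div_iff₀' hα, ← sum_Icc_one_eq_sum_range_succ hπ0]; exact hP n

theorem le_zero_of_mul_succ_le_add_sum_range {τ : ℕ → ℝ} (hτ : Tendsto τ atTop (𝓝 0))
    {c C : ℝ} (h : ∀ N : ℕ, c * (N + 1) ≤ C + ∑ m ∈ range (N + 1), τ m) : c ≤ 0 := by
  have hmean : Tendsto (fun N : ℕ => C / ((N + 1 : ℕ) : ℝ)
      + ((N + 1 : ℕ) : ℝ)⁻¹ * ∑ m ∈ range (N + 1), τ m) atTop (𝓝 0) := by
    have hC := (tendsto_const_div_atTop_nhds_zero_nat C).comp (tendsto_add_atTop_nat 1)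
    simpa using hC.add (hτ.cesaro.comp (tendsto_add_atTop_nat 1))
  refine ge_of_tendsto' hmean fun N => ?_
  rw [div_eq_inv_mul, ← mul_add, ← div_eq_inv_mul, le_div_iff₀ (by positivity)]
  exact_mod_cast h N

theorem summable_nat_mul_of_summable_tails {f : ℕ → ℝ} {S : ℝ} (hf0 : ∀ k, 0 ≤ f k)
    (hf : HasSum f S) (ht : Summable fun m => S - ∑ k ∈ range (m + 1), f k) :
    Summable fun k : ℕ => (k : ℝ) * f k := by
  have htail : ∀ m n, ∑ k ∈ Ioo m n, f k ≤ S - ∑ k ∈ range (m + 1), f k := by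
    intro m n
    have hdisj : Disjoint (range (m + 1)) (Ioo m n) := by
      rw [disjoint_left]
      intro k hk hk'
      simp only [mem_range, mem_Ioo] at hk hk'
      omega
    rw [le_sub_iff_add_le', ← sum_union hdisj]
    exact sum_le_hasSum _ (fun k _ => hf0 k) hf
  refine summable_of_sum_range_le (c := ∑' m, (S - ∑ k ∈ range (m + 1), f k))
    (fun k => mul_nonneg k.cast_nonneg (hf0 k)) fun n => ?_
  calc ∑ k ∈ range n, (k : ℝ) * f k = ∑ k ∈ range n, ∑ _m ∈ range k, f k := by
        simp only [sum_const, card_range, nsmul_eq_mul]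
    _ = ∑ m ∈ range n, ∑ k ∈ Ioo m n, f k := sum_comm' fun k m => by
        simp only [mem_range, mem_Ioo]; omega
    _ ≤ ∑ m ∈ range n, (S - ∑ k ∈ range (m + 1), f k) :=
        sum_le_sum fun m _ => htail m n
    _ ≤ _ := ht.sum_le_tsum _ fun m _ => sub_nonneg.2 (sum_le_hasSum _ (fun k _ => hf0 k) hf)

section TailEquation

variable {a τ : ℕ → ℝ} {α : ℝ}

theorem mul_sum_range_le_sum_range_mul_sub (hτ : ∀ m, 0 ≤ τ m) (ha : ∀ L, α ≤ a L) (N : ℕ) :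
    α * ∑ m ∈ range (N + 1), τ m ≤ ∑ L ∈ range (N + 1), a L * τ (N - L) := by
  rw [← sum_range_reflect τ, mul_sum]
  exact sum_le_sum fun L _ => by simpa using mul_le_mul_of_nonneg_right (ha L) (hτ (N - L))

theorem sum_range_mul_sub_le_sum_range (hτ : ∀ m, 0 ≤ τ m) (ha : ∀ L, a L ≤ 1) (N : ℕ) :
    ∑ L ∈ range (N + 1), a L * τ (N - L) ≤ ∑ m ∈ range (N + 1), τ m := by
  rw [← sum_range_reflect τ]
  exact sum_le_sum fun L _ => by simpa using mul_le_of_le_one_left (hτ (N - L)) (ha L)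

theorem eq_zero_and_summable_of_sum_range_mul_sub_eq (hα : 0 < α) (hαa : ∀ L, α ≤ a L)
    (ha1 : ∀ L, a L ≤ 1) (hτ : ∀ m, 0 ≤ τ m) (hτ0 : Tendsto τ atTop (𝓝 0)) {c : ℝ}
    (h : ∀ N, ∑ L ∈ range (N + 1), a L * τ (N - L) = 1 + c * ∑ L ∈ range (N + 1), a L) :
    c = 0 ∧ Summable τ := by
  have hc : |c| * α ≤ 0 := by
    refine le_zero_of_mul_succ_le_add_sum_range hτ0 (C := 1) fun N => ?_
    have hconv_nonneg : 0 ≤ ∑ L ∈ range (N + 1), a L * τ (N - L) :=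
      sum_nonneg fun L _ => mul_nonneg (hα.le.trans (hαa L)) (hτ _)
    calc |c| * α * (N + 1) = |c| * ∑ _L ∈ range (N + 1), α := by
          rw [sum_const, card_range, nsmul_eq_mul]; push_cast; ring
      _ ≤ |c| * ∑ L ∈ range (N + 1), a L := by gcongr with L; exact hαa L
      _ = |∑ L ∈ range (N + 1), a L * τ (N - L) - 1| := by
          rw [h, add_sub_cancel_left, abs_mul,
            abs_of_nonneg (sum_nonneg fun L _ => hα.le.trans (hαa L))]
      _ ≤ 1 + ∑ L ∈ range (N + 1), a L * τ (N - L) := by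
          rw [abs_le]; constructor <;> linarith
      _ ≤ 1 + ∑ m ∈ range (N + 1), τ m := by
          linarith [sum_range_mul_sub_le_sum_range hτ ha1 N]
  have hc0 : c = 0 := abs_nonpos_iff.1 (nonpos_of_mul_nonpos_left hc hα)
  refine ⟨hc0, summable_of_sum_range_le hτ (c := 1 / α) fun n => ?_⟩
  rcases n with _ | N
  · simpa using hα.le
  · rw [le_div_iff₀' hα]
    simpa [hc0, h N] using mul_sum_range_le_sum_range_mul_sub hτ hαa N

end TailEquation

theorem renewal_equation_probability_and_finite_mean
    (a π : ℕ → ℝ) (α : ℝ) (hα : 0 < α)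
    (hπ0 : π 0 = 0) (hπnn : ∀ k, 0 ≤ π k)
    (ha0 : a 0 = 1) (hale : ∀ L, a L ≤ 1) (hage : ∀ L, 1 ≤ L → α ≤ a L)
    (hren : ∀ L, 1 ≤ L → a L = ∑ k ∈ Finset.Icc 1 L, π k * a (L - k)) :
    (∑' k : ℕ, π k = 1) ∧ Summable (fun k : ℕ => (k : ℝ) * π k) := by
  have haα : ∀ L, α ≤ a L := fun L => by
    rcases L with _ | L
    · exact ha0 ▸ (hage 1 le_rfl).trans (hale 1)
    · exact hage _ L.succ_pos
  have hren' : ∀ m, 1 ≤ m → a m = ∑ L ∈ range (m + 1), a L * π (m - L) := fun m hm => by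
    rw [hren m hm, sum_Icc_one_eq_sum_range_succ (by simp [hπ0]), sum_range_succ_mul_sub_comm]
  obtain ⟨S, hS⟩ : Summable π := summable_of_renewal hα hπ0 hπnn hale haα hren
  have hτ : ∀ m, 0 ≤ S - ∑ k ∈ range (m + 1), π k :=
    fun m => sub_nonneg.2 (sum_le_hasSum _ (fun k _ => hπnn k) hS)
  have hτ0 : Tendsto (fun m => S - ∑ k ∈ range (m + 1), π k) atTop (𝓝 0) := by
    simpa using (tendsto_const_nhds (x := S)).sub
      (hS.tendsto_sum_nat.comp (tendsto_add_atTop_nat 1))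
  have htail (N : ℕ) : ∑ L ∈ range (N + 1), a L * (S - ∑ k ∈ range (N - L + 1), π k)
      = 1 + (S - 1) * ∑ L ∈ range (N + 1), a L := by
    calc _ = ∑ L ∈ range (N + 1), (a L * (1 - ∑ k ∈ range (N - L + 1), π k) + (S - 1) * a L) :=
          sum_congr rfl fun L _ => by ring
      _ = _ := by
          rw [sum_add_distrib, sum_mul_one_sub_sum_range_eq_one_of_renewal ha0 hπ0 hren' N, mul_sum]
  obtain ⟨hS1, hτs⟩ := eq_zero_and_summable_of_sum_range_mul_sub_eq hα haα hale hτ hτ0 htail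
  exact ⟨hS.tsum_eq.trans (sub_eq_zero.1 hS1), summable_nat_mul_of_summable_tails hπnn hS hτs⟩
end
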